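/- Let P and Q be probability measures with continuous positive densities f = α_f·exp(-β·d(·, x₀)) and g = α_g·exp(-β·d(·, x₁)) on a compact metric measure space, with α_f ≥ α_g, and suppose D = d(x₀, x₁) > 0 is small enough that the ball A of radius D/(3β) around x₀ (on which β·d(·, x₁) ≥ 2D/3) has μ(A) = c·D^n and e^{-D/3} - e^{-2D/3} ≥ D/6. Then KL(P, Q) ≥ 2·α_g²·c²·D^{2n+2}/36. -/

import Mathlib

/-!
By Pinsker's inequality `(∫ |f - g|)² ≤ 2 KL(f, g)` it suffices to bound the `L¹` distance of
the densities from below. On the ball `A`, `f - g ≥ α_g (e^{-D/3} - e^{-2D/3}) ≥ α_g D / 6`,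
and since `∫ (f - g) = 0` we get `∫ |f - g| = 2 ∫ (f - g)⁺ ≥ 2 · (α_g D / 6) · μ(A)`.

Pinsker's inequality itself comes from the pointwise bound
`3 (x - y)² ≤ (2x + 4y) (x log (x / y) - x + y)` and the Cauchy–Schwarz inequality with the
weight `(2f + 4g) / 3`, whose integral is `2`.
-/

open MeasureTheory Real Set InformationTheory

lemma monotoneOn_add_one_mul_log_sub :
    MonotoneOn (fun t : ℝ => (t + 1) * log t - 2 * (t - 1)) (Ioi 0) := by
  have hderiv : ∀ t : ℝ, 0 < t → HasDerivAt (fun t : ℝ => (t + 1) * log t - 2 * (t - 1))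
      (log t + t⁻¹ - 1) t := by
    intro t ht
    refine ((((hasDerivAt_id t).add_const 1).mul (hasDerivAt_log ht.ne')).sub
      (((hasDerivAt_id t).sub_const 1).const_mul 2)).congr_deriv ?_
    simp only [id]
    field_simp
    ring
  refine monotoneOn_of_hasDerivWithinAt_nonneg (convex_Ioi 0)
    (fun t ht => (hderiv t ht).continuousAt.continuousWithinAt)
    (fun t ht => (hderiv t (interior_subset ht)).hasDerivWithinAt) fun t ht => ?_
  have ht : 0 < t := interior_subset (s := Ioi (0 : ℝ)) ht
  have := log_le_sub_one_of_pos (inv_pos.2 ht)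
  rw [log_inv] at this
  linarith

lemma three_mul_sq_sub_one_le_mul_klFun {t : ℝ} (ht : 0 < t) :
    3 * (t - 1) ^ 2 ≤ (2 * t + 4) * klFun t := by
  set ψ : ℝ → ℝ := fun t => (t + 1) * log t - 2 * (t - 1)
  have hderiv : ∀ s : ℝ, 0 < s →
      HasDerivAt (fun t => (2 * t + 4) * klFun t - 3 * (t - 1) ^ 2) (4 * ψ s) s := by
    intro s hs
    refine ((((hasDerivAt_id s).const_mul 2).add_const 4 |>.mul
      (hasDerivAt_klFun hs.ne')).sub
      (((hasDerivAt_id s).sub_const 1).pow 2 |>.const_mul 3)).congr_deriv ?_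
    simp only [ψ, klFun_apply, id]
    ring
  have hψ1 : ψ 1 = 0 := by simp [ψ]
  have hmin : IsMinOn (fun t => (2 * t + 4) * klFun t - 3 * (t - 1) ^ 2) (Ioi 0) 1 := by
    refine isMinOn_Ioi_of_deriv (hderiv 1 one_pos).continuousAt
      (fun s hs => (hderiv s hs.1).differentiableAt.differentiableWithinAt)
      (fun s hs => (hderiv s (one_pos.trans hs)).differentiableAt.differentiableWithinAt)
      (fun s hs => ?_) (fun s hs => ?_)
    · rw [(hderiv s hs.1).deriv]
      have := monotoneOn_add_one_mul_log_sub hs.1 (mem_Ioi.2 one_pos) hs.2.le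
      linarith
    · rw [(hderiv s (one_pos.trans hs)).deriv]
      have := monotoneOn_add_one_mul_log_sub (mem_Ioi.2 one_pos) (mem_Ioi.2 (one_pos.trans hs))
        hs.le
      linarith
  have := hmin (mem_Ioi.2 ht)
  simp only [mem_ofPred_eq, klFun_one] at this
  linarith

lemma three_mul_sq_sub_le {x y : ℝ} (hx : 0 < x) (hy : 0 < y) :
    3 * (x - y) ^ 2 ≤ (2 * x + 4 * y) * (x * log (x / y) - x + y) := by
  have h := mul_le_mul_of_nonneg_left (three_mul_sq_sub_one_le_mul_klFun (div_pos hx hy))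
    (mul_nonneg hy.le hy.le)
  rw [klFun_apply] at h
  calc 3 * (x - y) ^ 2 = y * y * (3 * (x / y - 1) ^ 2) := by field_simp
    _ ≤ _ := h
    _ = _ := by field_simp; ring

section Pinsker

variable {Ω : Type*} [MeasurableSpace Ω] {μ : Measure Ω}

lemma sq_integral_abs_le_integral_mul_integral_sq_div {u w : Ω → ℝ} (hw : ∀ ω, 0 < w ω)
    (hu : Integrable u μ) (hwi : Integrable w μ)
    (huw : Integrable (fun ω => u ω ^ 2 / w ω) μ) :
    (∫ ω, |u ω| ∂μ) ^ 2 ≤ (∫ ω, w ω ∂μ) * ∫ ω, u ω ^ 2 / w ω ∂μ := by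
  have hquad : ∀ x : ℝ, 0 ≤ (∫ ω, w ω ∂μ) * (x * x) + (-2 * ∫ ω, |u ω| ∂μ) * x +
      ∫ ω, u ω ^ 2 / w ω ∂μ := by
    intro x
    have hsq : ∀ ω, (|u ω| - x * w ω) ^ 2 / w ω =
        w ω * (x * x) + -2 * x * |u ω| + u ω ^ 2 / w ω := by
      intro ω
      have := (hw ω).ne'
      field_simp
      rw [← sq_abs (u ω)]
      ring
    calc 0 ≤ ∫ ω, (|u ω| - x * w ω) ^ 2 / w ω ∂μ :=
          integral_nonneg fun ω => div_nonneg (sq_nonneg _) (hw ω).le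
      _ = _ := by
        have hw' : Integrable (fun ω => w ω * (x * x)) μ := hwi.mul_const _
        have hu' : Integrable (fun ω => -2 * x * |u ω|) μ := hu.abs.const_mul _
        simp_rw [hsq]
        rw [integral_add (f := fun ω => w ω * (x * x) + -2 * x * |u ω|) (hw'.add hu') huw,
          integral_add hw' hu', integral_mul_const,
          integral_const_mul]
        ring
  have := discrim_le_zero hquad
  rw [discrim] at this
  nlinarith

lemma mul_measureReal_le_integral_of_forall_le {v : Ω → ℝ} {s : Set Ω} {t : ℝ}
    (hv : 0 ≤ᵐ[μ] v) (hvi : Integrable v μ) (hs : ∀ ω ∈ s, t ≤ v ω) :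
    t * μ.real s ≤ ∫ ω, v ω ∂μ := by
  rcases le_or_gt t 0 with ht | ht
  · exact (mul_nonpos_of_nonpos_of_nonneg ht measureReal_nonneg).trans
      (integral_nonneg_of_ae hv)
  calc t * μ.real s ≤ t * μ.real {ω | t ≤ v ω} := by
        gcongr
        · exact (hvi.measure_ge_lt_top ht).ne
        · exact hs
    _ ≤ ∫ ω, v ω ∂μ := mul_meas_ge_le_integral_of_nonneg hv hvi t

lemma two_mul_mul_measureReal_le_integral_abs_sub {f g : Ω → ℝ} (hfi : Integrable f μ)
    (hgi : Integrable g μ) (hfg : ∫ ω, f ω ∂μ = ∫ ω, g ω ∂μ) {s : Set Ω} {t : ℝ}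
    (hs : ∀ ω ∈ s, t ≤ f ω - g ω) : 2 * (t * μ.real s) ≤ ∫ ω, |f ω - g ω| ∂μ := by
  rw [integral_abs_eq_two_mul_integral_posPart_sub_integral (f := fun ω => f ω - g ω)
    (hfi.sub hgi), integral_sub hfi hgi, hfg, sub_self, sub_zero]
  gcongr
  exact mul_measureReal_le_integral_of_forall_le (ae_of_all _ fun ω => posPart_nonneg _)
    (hfi.sub hgi).pos_part fun ω hω => (hs ω hω).trans (le_posPart _)

theorem sq_integral_abs_sub_le_two_mul_integral_mul_log {f g : Ω → ℝ} (hf : ∀ ω, 0 < f ω)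
    (hg : ∀ ω, 0 < g ω) (hf1 : ∫ ω, f ω ∂μ = 1) (hg1 : ∫ ω, g ω ∂μ = 1)
    (hKL : Integrable (fun ω => f ω * log (f ω / g ω)) μ) :
    (∫ ω, |f ω - g ω| ∂μ) ^ 2 ≤ 2 * ∫ ω, f ω * log (f ω / g ω) ∂μ := by
  have hfi : Integrable f μ := .of_integral_ne_zero (by rw [hf1]; exact one_ne_zero)
  have hgi : Integrable g μ := .of_integral_ne_zero (by rw [hg1]; exact one_ne_zero)
  set w : Ω → ℝ := fun ω => (2 * f ω + 4 * g ω) / 3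
  have hw : ∀ ω, 0 < w ω := fun ω => by have := hf ω; have := hg ω; positivity
  have hwi : Integrable w μ :=
    Integrable.div_const (f := fun ω => 2 * f ω + 4 * g ω)
      ((hfi.const_mul 2).add (hgi.const_mul 4)) 3
  have hw2 : ∫ ω, w ω ∂μ = 2 := by
    rw [integral_div, integral_add (hfi.const_mul 2) (hgi.const_mul 4), integral_const_mul,
      integral_const_mul, hf1, hg1]
    norm_num
  have hdom : ∀ ω, (f ω - g ω) ^ 2 / w ω ≤ f ω * log (f ω / g ω) - f ω + g ω := fun ω => by
    rw [div_le_iff₀ (hw ω)]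
    simp only [w]
    linarith [three_mul_sq_sub_le (hf ω) (hg ω)]
  have hdomi : Integrable (fun ω => f ω * log (f ω / g ω) - f ω + g ω) μ :=
    (hKL.sub hfi).add hgi
  have huw : Integrable (fun ω => (f ω - g ω) ^ 2 / w ω) μ := by
    refine hdomi.mono' ?_ (ae_of_all _ fun ω => ?_)
    · exact (((hfi.aemeasurable.sub hgi.aemeasurable).pow_const 2).div
        hwi.aemeasurable).aestronglyMeasurable
    · rw [Real.norm_of_nonneg (div_nonneg (sq_nonneg _) (hw ω).le)]
      exact hdom ω
  calc (∫ ω, |f ω - g ω| ∂μ) ^ 2 ≤ (∫ ω, w ω ∂μ) * ∫ ω, (f ω - g ω) ^ 2 / w ω ∂μ :=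
        sq_integral_abs_le_integral_mul_integral_sq_div hw (hfi.sub hgi) hwi huw
    _ ≤ 2 * ∫ ω, (f ω * log (f ω / g ω) - f ω + g ω) ∂μ := by
        rw [hw2]
        exact mul_le_mul_of_nonneg_left (integral_mono huw hdomi hdom) zero_le_two
    _ = 2 * ∫ ω, f ω * log (f ω / g ω) ∂μ := by
        rw [integral_add (f := fun ω => f ω * log (f ω / g ω) - f ω) (hKL.sub hfi) hgi,
          integral_sub hKL hfi, hf1, hg1]
        ring

end Pinsker

lemma abs_log_mul_exp_div_mul_exp_le {Ω : Type*} [PseudoMetricSpace Ω] (x₀ x₁ ω : Ω)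
    {a b β : ℝ} (ha : 0 < a) (hb : 0 < b) :
    |log (a * exp (-β * dist ω x₀) / (b * exp (-β * dist ω x₁)))| ≤
      |log (a / b)| + |β| * dist x₀ x₁ := by
  have hsplit : a * exp (-β * dist ω x₀) / (b * exp (-β * dist ω x₁)) =
      a / b * exp (β * (dist ω x₁ - dist ω x₀)) := by
    rw [mul_div_mul_comm, ← exp_sub]
    ring_nf
  rw [hsplit, log_mul (div_pos ha hb).ne' (exp_pos _).ne', log_exp]
  calc _ ≤ |log (a / b)| + |β * (dist ω x₁ - dist ω x₀)| := abs_add_le _ _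
    _ ≤ |log (a / b)| + |β| * dist x₀ x₁ := by
        rw [abs_mul, dist_comm ω x₁, dist_comm ω x₀]
        gcongr
        exact dist_comm x₁ x₀ ▸ abs_dist_sub_le x₁ x₀ ω

lemma mul_exp_sub_exp_le {a b r s x y : ℝ} (hb : 0 ≤ b) (hba : b ≤ a) (hx : r ≤ x)
    (hy : y ≤ s) : b * (exp r - exp s) ≤ a * exp x - b * exp y := by
  have h₁ : b * exp r ≤ a * exp x :=
    calc b * exp r ≤ b * exp x := by gcongr
      _ ≤ a * exp x := by gcongr
  have h₂ : b * exp y ≤ b * exp s := by gcongr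
  linarith

theorem kl_polynomial_lower_bound_general {Ω : Type*} [MetricSpace Ω]
    [MeasurableSpace Ω] (μ : Measure Ω) (x₀ x₁ : Ω) (β : ℝ) (hβ : 0 < β)
    (αf αg : ℝ) (hαg : 0 < αg) (hα : αg ≤ αf)
    (n : ℕ) (c : ℝ) (hc : 0 < c) (D : ℝ) (hD : D = dist x₀ x₁)
    (hf1 : ∫ ω, αf * Real.exp (-β * dist ω x₀) ∂μ = 1)
    (hg1 : ∫ ω, αg * Real.exp (-β * dist ω x₁) ∂μ = 1)
    (hsep : ∀ ω ∈ {ω : Ω | dist ω x₀ ≤ D / (3 * β)}, 2 * D / 3 ≤ β * dist ω x₁)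
    (hvol : μ {ω : Ω | dist ω x₀ ≤ D / (3 * β)} = ENNReal.ofReal (c * D ^ n))
    (hexp : D / 6 ≤ Real.exp (-D / 3) - Real.exp (-2 * D / 3)) :
    (∫ ω, (αf * Real.exp (-β * dist ω x₀)) *
        Real.log ((αf * Real.exp (-β * dist ω x₀)) /
          (αg * Real.exp (-β * dist ω x₁))) ∂μ) ≥
      2 * αg ^ 2 * c ^ 2 * D ^ (2 * n + 2) / 36 := by
  set A := {ω : Ω | dist ω x₀ ≤ D / (3 * β)}
  set f : Ω → ℝ := fun ω => αf * exp (-β * dist ω x₀)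
  set g : Ω → ℝ := fun ω => αg * exp (-β * dist ω x₁)
  have hαf : 0 < αf := hαg.trans_le hα
  have hD0 : 0 ≤ D := hD ▸ dist_nonneg
  have hfi : Integrable f μ := .of_integral_ne_zero (by rw [hf1]; exact one_ne_zero)
  have hgi : Integrable g μ := .of_integral_ne_zero (by rw [hg1]; exact one_ne_zero)
  have hKL : Integrable (fun ω => f ω * log (f ω / g ω)) μ :=
    hfi.mul_bdd (measurable_log.comp_aemeasurable
      (hfi.aemeasurable.div hgi.aemeasurable)).aestronglyMeasurable
      (ae_of_all _ fun ω => abs_log_mul_exp_div_mul_exp_le x₀ x₁ ω hαf hαg)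
  have hgap : ∀ ω ∈ A, αg * D / 6 ≤ f ω - g ω := fun ω hω => by
    have hx : dist ω x₀ * (3 * β) ≤ D := (le_div_iff₀ (by positivity)).1 hω
    have hy := hsep ω hω
    calc αg * D / 6 ≤ αg * (exp (-D / 3) - exp (-2 * D / 3)) := by nlinarith
      _ ≤ f ω - g ω := mul_exp_sub_exp_le hαg.le hα (by linarith) (by linarith)
  have hμA : μ.real A = c * D ^ n := by
    rw [measureReal_def, hvol, ENNReal.toReal_ofReal (by positivity)]
  have htv : 2 * (αg * D / 6 * (c * D ^ n)) ≤ ∫ ω, |f ω - g ω| ∂μ :=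
    hμA ▸ two_mul_mul_measureReal_le_integral_abs_sub hfi hgi (hf1.trans hg1.symm) hgap
  have hpinsker := sq_integral_abs_sub_le_two_mul_integral_mul_log (fun ω => by positivity)
    (fun ω => by positivity) hf1 hg1 hKL
  rw [ge_iff_le]
  calc 2 * αg ^ 2 * c ^ 2 * D ^ (2 * n + 2) / 36
        = (2 * (αg * D / 6 * (c * D ^ n))) ^ 2 / 2 := by ring
    _ ≤ (∫ ω, |f ω - g ω| ∂μ) ^ 2 / 2 := by gcongr
    _ ≤ ∫ ω, f ω * log (f ω / g ω) ∂μ := by linarith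

/-- Polynomial KL lower bound for the exponential model: under the stated
separation, volume and elementary-inequality hypotheses,
`KL(P, Q) ≥ 2 α_g² c² D^{2n+2} / 36`. -/
theorem kl_polynomial_lower_bound {Ω : Type*} [MetricSpace Ω] [CompactSpace Ω]
    [MeasurableSpace Ω] (μ : Measure Ω) (x₀ x₁ : Ω) (β : ℝ) (hβ : 0 < β)
    (αf αg : ℝ) (hαg : 0 < αg) (hα : αg ≤ αf)
    (n : ℕ) (c : ℝ) (hc : 0 < c) (D : ℝ) (hD : D = dist x₀ x₁) (hDpos : 0 < D)
    (hf1 : ∫ ω, αf * Real.exp (-β * dist ω x₀) ∂μ = 1)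
    (hg1 : ∫ ω, αg * Real.exp (-β * dist ω x₁) ∂μ = 1)
    (hsep : ∀ ω ∈ {ω : Ω | dist ω x₀ ≤ D / (3 * β)}, 2 * D / 3 ≤ β * dist ω x₁)
    (hvol : μ {ω : Ω | dist ω x₀ ≤ D / (3 * β)} = ENNReal.ofReal (c * D ^ n))
    (hexp : D / 6 ≤ Real.exp (-D / 3) - Real.exp (-2 * D / 3)) :
    (∫ ω, (αf * Real.exp (-β * dist ω x₀)) *
        Real.log ((αf * Real.exp (-β * dist ω x₀)) /
          (αg * Real.exp (-β * dist ω x₁))) ∂μ) ≥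
      2 * αg ^ 2 * c ^ 2 * D ^ (2 * n + 2) / 36 :=
  kl_polynomial_lower_bound_general μ x₀ x₁ β hβ αf αg hαg hα n c hc D hD hf1 hg1 hsep hvol hexp
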